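/- arXiv:2105.06287 — 2 statements merged into one kernel-verified Lean document; each statement's English description precedes it below -/
import Mathlib

section
/- For every k ∈ M, the family {A_z : z ∈ T(k)} is a partition of {1, 2, …, k}: the sets A_z for z ∈ T(k) are pairwise disjoint and their union equals {1, 2, …, k}. Moreover, writing T(k) = {i_1, i_2, …, i_n} with i_1 < i_2 < … < i_n, one has i_q = v(i_{q+1}) − 1 for every q = 1, 2, …, n−1. -/
open scoped Classical
open Finset MeasureTheory

namespace BSHM

noncomputable section

/-- The set of candidate parents of machine type `i`: types `j ∈ M` with `j > i`
and a strictly smaller normalized cost rate per capacity unit. -/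
def pset (m : ℕ) (g r : ℕ → ℝ) (i : ℕ) : Set ℕ :=
  {j | j ≤ m ∧ i < j ∧ r j / g j < r i / g i}

/-- The parent `p i` of machine type `i` (equal to `0` when the parent is undefined,
since any actual parent has index `≥ 2`). -/
def p (m : ℕ) (g r : ℕ → ℝ) (i : ℕ) : ℕ := sInf (pset m g r i)

/-- `pdef i` asserts that the parent of `i` is defined. -/
def pdef (m : ℕ) (g r : ℕ → ℝ) (i : ℕ) : Prop := (pset m g r i).Nonempty

/-- One step of the parent relation: `b` is the (defined) parent of `a`. -/
def pstep (m : ℕ) (g r : ℕ → ℝ) (a b : ℕ) : Prop :=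
  pdef m g r a ∧ b = p m g r a

/-- `P i`: the set consisting of `i` together with all of its iterated parents. -/
def P (m : ℕ) (g r : ℕ → ℝ) (i : ℕ) : Set ℕ :=
  {z | Relation.ReflTransGen (pstep m g r) i z}

/-- `A i`: the set of nodes in the tree rooted at `i`,
i.e. all `z ∈ M` having `i` as an ancestor (or equal to `i`). -/
def A (m : ℕ) (g r : ℕ → ℝ) (i : ℕ) : Set ℕ :=
  {z | 1 ≤ z ∧ z ≤ m ∧ i ∈ P m g r z}

/-- `v i`: the lowest-indexed node in the tree rooted at `i`. -/
def v (m : ℕ) (g r : ℕ → ℝ) (i : ℕ) : ℕ := sInf (A m g r i)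

/-- `y i`: the younger siblings of `i` (same parent status, smaller index). -/
def y (m : ℕ) (g r : ℕ → ℝ) (i : ℕ) : Set ℕ :=
  {z | 1 ≤ z ∧ z ≤ m ∧ z < i ∧ p m g r z = p m g r i}

/-- `esib i`: the elder siblings of `i`. -/
def esib (m : ℕ) (g r : ℕ → ℝ) (i : ℕ) : Set ℕ :=
  {z | 1 ≤ z ∧ z ≤ m ∧ i < z ∧ p m g r z = p m g r i}

/-- `T k := {k} ∪ ⋃_{z ∈ P(k)} y(z)`. -/
def T (m : ℕ) (g r : ℕ → ℝ) (k : ℕ) : Set ℕ :=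
  {k} ∪ ⋃ z ∈ P m g r k, y m g r z

/-- `T k` as a `Finset` (all relevant nodes lie in `{k} ∪ [1, m]`). -/
def TIcc (m : ℕ) (g r : ℕ → ℝ) (k : ℕ) : Finset ℕ :=
  (insert k (Finset.Icc 1 m)).filter (fun z => z ∈ T m g r k)

end

end BSHM

/-!
Write `c = r / g`. The ancestors of `z` are exactly the strict running minima of `c` to the
right of `z`, so `A i` consists of the `z ≤ i` with `c i < c w` for all `w ∈ [z, i)`, while `T k`
consists of the `i ≤ k` with `c i ≤ c w` for all `w ∈ (i, k]`. Hence for `i < j` in `T k` every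
element of `A j` exceeds `i`, which gives disjointness; and the leftmost minimiser of `c` on
`[x, k]` is an element of `T k` whose subtree contains `x`, which gives the covering. Applied to
`x = i + 1` for consecutive `i < j`, the covering element must be `j`, so `v j = i + 1`.
-/

namespace BSHM

theorem exists_Icc_least_argmin {α : Type*} [LinearOrder α] (c : ℕ → α) {a b : ℕ}
    (hab : a ≤ b) :
    ∃ z, a ≤ z ∧ z ≤ b ∧ (∀ w, a ≤ w → w < z → c z < c w) ∧
      ∀ w, a ≤ w → w ≤ b → c z ≤ c w := by
  have hex : ∃ z, a ≤ z ∧ z ≤ b ∧ ∀ w, a ≤ w → w ≤ b → c z ≤ c w := by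
    obtain ⟨z, hz, hmin⟩ := (Finset.Icc a b).exists_min_image c ⟨a, by simp [hab]⟩
    exact ⟨z, (Finset.mem_Icc.mp hz).1, (Finset.mem_Icc.mp hz).2,
      fun w haw hwb => hmin w (Finset.mem_Icc.mpr ⟨haw, hwb⟩)⟩
  obtain ⟨haz, hzb, hmin⟩ := Nat.find_spec hex
  refine ⟨Nat.find hex, haz, hzb, fun w haw hwz => ?_, hmin⟩
  have hnot := Nat.find_min hex hwz
  push Not at hnot
  obtain ⟨u, hau, hub, hlt⟩ := hnot haw (hwz.trans_le hzb).le
  exact (hmin u hau hub).trans_lt hlt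

section Parent

variable {m : ℕ} {g r : ℕ → ℝ} {i j q w z : ℕ}

theorem p_mem_pset (h : pdef m g r i) : p m g r i ∈ pset m g r i := Nat.sInf_mem h

theorem p_le_of_mem_pset (h : j ∈ pset m g r i) : p m g r i ≤ j := Nat.sInf_le h

theorem p_eq_zero_of_not_pdef (h : ¬ pdef m g r i) : p m g r i = 0 := by
  rw [p, Set.not_nonempty_iff_eq_empty.mp h, Nat.sInf_empty]

theorem p_eq_of_mem_pset (hq : q ∈ pset m g r z)
    (hmin : ∀ w, z < w → w < q → r z / g z ≤ r w / g w) : p m g r z = q := by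
  refine (p_le_of_mem_pset hq).antisymm (not_lt.mp fun hlt => ?_)
  obtain ⟨-, hzp, hlt'⟩ := p_mem_pset ⟨q, hq⟩
  exact (hmin _ hzp hlt).not_gt hlt'

theorem p_eq_zero_of_forall_le (hmin : ∀ w, z < w → w ≤ m → r z / g z ≤ r w / g w) :
    p m g r z = 0 :=
  p_eq_zero_of_not_pdef fun ⟨w, hwm, hzw, hlt⟩ => (hmin w hzw hwm).not_gt hlt

theorem ratio_le_of_le_of_lt_p (hiw : i ≤ w) (hwp : w < p m g r i) :
    r i / g i ≤ r w / g w := by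
  by_cases hdef : pdef m g r i
  · obtain ⟨hpm, -, -⟩ := p_mem_pset hdef
    rcases hiw.eq_or_lt with rfl | hiw
    · exact le_rfl
    by_contra! hlt
    exact hwp.not_ge (p_le_of_mem_pset ⟨by omega, hiw, hlt⟩)
  · rw [p_eq_zero_of_not_pdef hdef] at hwp
    omega

theorem ratio_le_of_p_eq (hpz : p m g r i = p m g r z) (hiw : i < w) (hwz : w ≤ z)
    (hwm : w ≤ m) : r i / g i ≤ r w / g w := by
  by_contra! hlt
  have hw : w ∈ pset m g r i := ⟨hwm, hiw, hlt⟩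
  have hpw := p_le_of_mem_pset hw
  have hip := (p_mem_pset ⟨w, hw⟩).2.1
  by_cases hz : pdef m g r z
  · have := (p_mem_pset hz).2.1
    omega
  · have := p_eq_zero_of_not_pdef hz
    omega

theorem mem_P_of_forall_lt {z j : ℕ} (hzj : z ≤ j) (hjm : j ≤ m)
    (h : ∀ w, z ≤ w → w < j → r j / g j < r w / g w) : j ∈ P m g r z := by
  rcases hzj.eq_or_lt with rfl | hlt
  · exact .refl
  have hj : j ∈ pset m g r z := ⟨hjm, hlt, h z le_rfl hlt⟩
  have hzp := (p_mem_pset ⟨j, hj⟩).2.1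
  have hpj := p_le_of_mem_pset hj
  exact .head ⟨⟨j, hj⟩, rfl⟩
    (mem_P_of_forall_lt hpj hjm fun w hw hwj => h w (hzp.le.trans hw) hwj)
termination_by j - z

theorem mem_P_iff (hzm : z ≤ m) :
    j ∈ P m g r z ↔ z ≤ j ∧ j ≤ m ∧ ∀ w, z ≤ w → w < j → r j / g j < r w / g w := by
  refine ⟨fun hj => ?_, fun ⟨hzj, hjm, h⟩ => mem_P_of_forall_lt hzj hjm h⟩
  induction hj with
  | refl => exact ⟨le_rfl, hzm, fun w hw hw' => absurd hw' hw.not_gt⟩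
  | @tail b _ _ hstep ih =>
    obtain ⟨hzb, -, hmin⟩ := ih
    obtain ⟨hdef, rfl⟩ := hstep
    obtain ⟨hpm, hbp, hpb⟩ := p_mem_pset hdef
    refine ⟨hzb.trans hbp.le, hpm, fun w hzw hwp => ?_⟩
    rcases lt_or_ge w b with hwb | hbw
    · exact hpb.trans (hmin w hzw hwb)
    · exact hpb.trans_le (ratio_le_of_le_of_lt_p hbw hwp)

theorem mem_A_iff (him : i ≤ m) :
    z ∈ A m g r i ↔ 1 ≤ z ∧ z ≤ i ∧ ∀ w, z ≤ w → w < i → r i / g i < r w / g w := by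
  constructor
  · rintro ⟨hz1, hzm, hi⟩
    obtain ⟨hzi, -, hmin⟩ := (mem_P_iff hzm).mp hi
    exact ⟨hz1, hzi, hmin⟩
  · rintro ⟨hz1, hzi, hmin⟩
    exact ⟨hz1, hzi.trans him, (mem_P_iff (hzi.trans him)).mpr ⟨hzi, him, hmin⟩⟩

/-- The ancestor `z` of `k` with `i ∈ y z` is the leftmost minimiser of `r / g` on `[k, p i)`
(on `[k, m]` when `i` has no parent). -/
theorem mem_T_of_forall_le {k : ℕ} (hkm : k ≤ m) (hi1 : 1 ≤ i) (hik : i < k)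
    (hmin : ∀ w, i < w → w ≤ k → r i / g i ≤ r w / g w) : i ∈ T m g r k := by
  suffices ∃ z ∈ P m g r k, i < z ∧ p m g r i = p m g r z from
    let ⟨z, hz, hiz, hpz⟩ := this
    Or.inr (Set.mem_biUnion hz ⟨hi1, by omega, hiz, hpz⟩)
  by_cases hdef : pdef m g r i
  · obtain ⟨hpm, hip, hpi⟩ := p_mem_pset hdef
    have hkp : k < p m g r i := not_le.mp fun hpk => (hmin _ hip hpk).not_gt hpi
    obtain ⟨z, hkz, hzp, hlt, hle⟩ :=
      exists_Icc_least_argmin (fun w => r w / g w) (Nat.le_sub_one_of_lt hkp)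
    refine ⟨z, mem_P_of_forall_lt hkz (by omega) hlt, by omega, (p_eq_of_mem_pset ?_ ?_).symm⟩
    · exact ⟨hpm, by omega, hpi.trans_le (ratio_le_of_le_of_lt_p (m := m) (by omega) (by omega))⟩
    · exact fun w hzw hwp => hle w (by omega) (by omega)
  · obtain ⟨z, hkz, hzm, hlt, hle⟩ := exists_Icc_least_argmin (fun w => r w / g w) hkm
    refine ⟨z, mem_P_of_forall_lt hkz hzm hlt, by omega, ?_⟩
    rw [p_eq_zero_of_not_pdef hdef, p_eq_zero_of_forall_le fun w hzw hwm => hle w (by omega) hwm]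

theorem mem_T_iff {k : ℕ} (hk1 : 1 ≤ k) (hkm : k ≤ m) :
    i ∈ T m g r k ↔ 1 ≤ i ∧ i ≤ k ∧ ∀ w, i < w → w ≤ k → r i / g i ≤ r w / g w := by
  constructor
  · rintro (rfl | hi)
    · exact ⟨hk1, le_rfl, fun w hw hw' => absurd hw' hw.not_ge⟩
    obtain ⟨z, hz, hi1, -, hiz, hpz⟩ := Set.mem_iUnion₂.mp hi
    obtain ⟨hkz, hzm, hmin⟩ := (mem_P_iff hkm).mp hz
    have hik : i ≤ k := not_lt.mp fun hki =>
      (ratio_le_of_p_eq hpz hiz le_rfl hzm).not_gt (hmin i hki.le hiz)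
    exact ⟨hi1, hik, fun w hiw hwk => ratio_le_of_p_eq hpz hiw (hwk.trans hkz) (hwk.trans hkm)⟩
  · rintro ⟨hi1, hik, hmin⟩
    rcases hik.eq_or_lt with rfl | hik
    · exact Or.inl rfl
    exact mem_T_of_forall_le hkm hi1 hik hmin

end Parent

section Partition

variable {m : ℕ} {g r : ℕ → ℝ} {k i j x : ℕ}

theorem lt_of_mem_T_of_mem_A (hk1 : 1 ≤ k) (hkm : k ≤ m) (hi : i ∈ T m g r k)
    (hj : j ∈ T m g r k) (hij : i < j) (hx : x ∈ A m g r j) : i < x := by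
  obtain ⟨-, -, hmin⟩ := (mem_T_iff hk1 hkm).mp hi
  obtain ⟨-, hjk, -⟩ := (mem_T_iff hk1 hkm).mp hj
  obtain ⟨-, -, hlt⟩ := (mem_A_iff (hjk.trans hkm)).mp hx
  exact not_le.mp fun hxi => (hmin j hij hjk).not_gt (hlt i hxi hij)

theorem le_of_mem_A (hx : x ∈ A m g r i) : x ≤ i :=
  ((mem_P_iff hx.2.1).mp hx.2.2).1

theorem le_of_mem_T (hk1 : 1 ≤ k) (hkm : k ≤ m) (hi : i ∈ T m g r k) : i ≤ k :=
  ((mem_T_iff hk1 hkm).mp hi).2.1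

theorem exists_mem_T_mem_A (hk1 : 1 ≤ k) (hkm : k ≤ m) (hx1 : 1 ≤ x) (hxk : x ≤ k) :
    ∃ i ∈ T m g r k, x ∈ A m g r i := by
  obtain ⟨i, hxi, hik, hlt, hle⟩ := exists_Icc_least_argmin (fun w => r w / g w) hxk
  refine ⟨i, (mem_T_iff hk1 hkm).mpr ⟨by omega, hik, fun w hiw hwk => hle w (by omega) hwk⟩, ?_⟩
  exact (mem_A_iff (hik.trans hkm)).mpr ⟨hx1, hxi, hlt⟩

end Partition

theorem statement_3_general (m : ℕ) (g r : ℕ → ℝ) :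
    ∀ k, 1 ≤ k → k ≤ m →
      ((∀ z1 ∈ T m g r k, ∀ z2 ∈ T m g r k, z1 ≠ z2 →
          A m g r z1 ∩ A m g r z2 = ∅) ∧
       (⋃ z ∈ T m g r k, A m g r z) = Set.Icc 1 k ∧
       (∀ i ∈ T m g r k, ∀ j ∈ T m g r k, i < j →
          (∀ z ∈ T m g r k, ¬ (i < z ∧ z < j)) → i = v m g r j - 1)) := by
  intro k hk1 hkm
  refine ⟨fun i hi j hj hij => ?_, ?_, fun i hi j hj hij hgap => ?_⟩
  · refine Set.eq_empty_iff_forall_notMem.mpr fun x ⟨hxi, hxj⟩ => ?_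
    rcases hij.lt_or_gt with hij | hji
    · exact (lt_of_mem_T_of_mem_A hk1 hkm hi hj hij hxj).not_ge (le_of_mem_A hxi)
    · exact (lt_of_mem_T_of_mem_A hk1 hkm hj hi hji hxi).not_ge (le_of_mem_A hxj)
  · ext x
    simp only [Set.mem_iUnion, Set.mem_Icc, exists_prop]
    exact ⟨fun ⟨i, hi, hx⟩ => ⟨hx.1, (le_of_mem_A hx).trans (le_of_mem_T hk1 hkm hi)⟩,
      fun ⟨hx1, hxk⟩ => exists_mem_T_mem_A hk1 hkm hx1 hxk⟩
  · obtain ⟨z, hz, hxz⟩ :=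
      exists_mem_T_mem_A hk1 hkm (by omega) (hij.trans_le (le_of_mem_T hk1 hkm hj))
    have hiz : i < z := Nat.lt_of_succ_le (le_of_mem_A hxz)
    have hjz : j ≤ z := not_lt.mp fun hzj => hgap z hz ⟨hiz, hzj⟩
    obtain rfl : j = z := hjz.eq_or_lt.resolve_right fun hjz =>
      (lt_of_mem_T_of_mem_A hk1 hkm hj hz hjz hxz).not_ge hij
    have hv : v m g r j ∈ A m g r j := Nat.sInf_mem ⟨_, hxz⟩
    have hiv := lt_of_mem_T_of_mem_A hk1 hkm hi hj hij hv
    have hvi : v m g r j ≤ i + 1 := Nat.sInf_le hxz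
    omega

/-- For every `k ∈ M`, the family `{A z : z ∈ T(k)}` is a
partition of `{1, …, k}`: the sets are pairwise disjoint and their union is
`{1, …, k}`.  Moreover, consecutive elements `i < j` of `T(k)` (no element of
`T(k)` lies strictly between them) satisfy `i = v j − 1`. -/
theorem statement_3 (m : ℕ) (g r : ℕ → ℝ)
    (hm : 1 ≤ m)
    (hg1 : 0 < g 1) (hr1 : 0 < r 1)
    (hg : ∀ i j, 1 ≤ i → i < j → j ≤ m → g i < g j)
    (hr : ∀ i j, 1 ≤ i → i < j → j ≤ m → r i < r j) :
    ∀ k, 1 ≤ k → k ≤ m →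
      ((∀ z1 ∈ T m g r k, ∀ z2 ∈ T m g r k, z1 ≠ z2 →
          A m g r z1 ∩ A m g r z2 = ∅) ∧
       (⋃ z ∈ T m g r k, A m g r z) = Set.Icc 1 k ∧
       (∀ i ∈ T m g r k, ∀ j ∈ T m g r k, i < j →
          (∀ z ∈ T m g r k, ¬ (i < z ∧ z < j)) → i = v m g r j - 1)) :=
  statement_3_general m g r

end BSHM
end

section
/- For every k0 ∈ M and every k1 ∈ P(k0), setting z0 := min(T(k0) ∩ A_{k1}) (this set is nonempty since it contains k0): (1) T(k0) ∩ A_{k1} = (⋃_{z ∈ P(k0)\P(k1)} y(z)) ∪ {k0} = {z ∈ T(k0) : z ≥ z0}; and (2) T(k0) \ A_{k1} = ⋃_{z ∈ P(k1)} y(z) = {z ∈ T(k0) : z < z0}. -/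
open scoped Classical
open Finset MeasureTheory

/-!
The parent map is non-crossing: if `u` lies strictly between `x` and `p x`, then by minimality of
`p x` the ratio of `u` is at least that of `x`, so `p x` is a candidate parent of `u` and
`p u ≤ p x`. Iterating along a path, a node `u` between `w` and an ancestor `z` of `w` has
`p u ≤ z`. Hence a younger sibling `u` of `z` (so `u < z < p u = p z`) lies below every node of
the subtree `A z`.

Since the ancestors of `k0` form a chain, `P k0` splits into the part strictly below `k1` and
`P k1`. Siblings of nodes of the first part share the parent of such a node, so lie in `A k1`;
siblings of nodes of `P k1` lie below `A k1`. This gives both set identities, and since every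
element of `T k0 \ A k1` is smaller than every element of `T k0 ∩ A k1`, the split happens at
`z0 = sInf (T k0 ∩ A k1)`.
-/

open Set

theorem Set.union_inter_eq_left_of_subset_of_disjoint {α : Type*} {U V X : Set α} (hU : U ⊆ X)
    (hV : Disjoint V X) : (U ∪ V) ∩ X = U := by
  rw [union_inter_distrib_right, inter_eq_left.mpr hU, hV.inter_eq, union_empty]

theorem Set.union_diff_eq_right_of_subset_of_disjoint {α : Type*} {U V X : Set α} (hU : U ⊆ X)
    (hV : Disjoint V X) : (U ∪ V) \ X = V := by
  rw [union_sdiff_distrib, sdiff_eq_empty.mpr hU, hV.sdiff_eq_left, empty_union]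

section SplitAtInf

variable {S X : Set ℕ}

theorem Nat.inter_eq_sep_sInf_le (hne : (S ∩ X).Nonempty)
    (hlt : ∀ a ∈ S \ X, ∀ b ∈ S ∩ X, a < b) : S ∩ X = {z ∈ S | sInf (S ∩ X) ≤ z} := by
  ext w
  refine ⟨fun hw => ⟨hw.1, Nat.sInf_le hw⟩, fun ⟨hwS, hle⟩ => ⟨hwS, ?_⟩⟩
  by_contra hwX
  exact (hlt w ⟨hwS, hwX⟩ _ (Nat.sInf_mem hne)).not_ge hle

theorem Nat.diff_eq_sep_lt_sInf (hne : (S ∩ X).Nonempty)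
    (hlt : ∀ a ∈ S \ X, ∀ b ∈ S ∩ X, a < b) : S \ X = {z ∈ S | z < sInf (S ∩ X)} := by
  ext w
  refine ⟨fun hw => Set.mem_sep hw.1 (hlt w hw _ (Nat.sInf_mem hne)), fun hw => ⟨hw.1, ?_⟩⟩
  exact fun hwX => (Nat.sInf_le (Set.mem_inter hw.1 hwX)).not_gt hw.2

end SplitAtInf

namespace BSHM

variable {m : ℕ} {g r : ℕ → ℝ}

lemma lt_p {i : ℕ} (h : pdef m g r i) : i < p m g r i := (Nat.sInf_mem h).2.1

lemma pdef_iff_p_ne_zero {i : ℕ} : pdef m g r i ↔ p m g r i ≠ 0 := by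
  refine ⟨fun h => (lt_p h).ne_bot, fun h => ?_⟩
  by_contra h'
  rw [pdef, Set.not_nonempty_iff_eq_empty] at h'
  simp [p, h'] at h

lemma le_of_mem_P {a b : ℕ} (h : b ∈ P m g r a) : a ≤ b := by
  induction h with
  | refl => exact le_rfl
  | tail _ hstep ih => exact ih.trans (hstep.2 ▸ lt_p hstep.1).le

lemma P_subset_P {a b : ℕ} (h : b ∈ P m g r a) : P m g r b ⊆ P m g r a :=
  fun _ hc => Relation.ReflTransGen.trans h hc

lemma mem_P_total {a b c : ℕ} (hb : b ∈ P m g r a) (hc : c ∈ P m g r a) :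
    c ∈ P m g r b ∨ b ∈ P m g r c :=
  Relation.ReflTransGen.total_of_right_unique (fun _ _ _ h1 h2 => h1.2.trans h2.2.symm) hb hc

lemma pdef_and_p_le_p_of_mem_Ico {x u : ℕ} (hx : pdef m g r x) (hu : u ∈ Set.Ico x (p m g r x))
    (hum : u ≤ m) : pdef m g r u ∧ p m g r u ≤ p m g r x := by
  obtain rfl | hxu := hu.1.eq_or_lt
  · exact ⟨hx, le_rfl⟩
  have hpx := Nat.sInf_mem hx
  have hratio : r x / g x ≤ r u / g u :=
    not_lt.mp fun hc => Nat.notMem_of_lt_sInf hu.2 ⟨hum, hxu, hc⟩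
  have hcand : p m g r x ∈ pset m g r u := ⟨hpx.1, hu.2, hpx.2.2.trans_le hratio⟩
  exact ⟨⟨_, hcand⟩, Nat.sInf_le hcand⟩

lemma pdef_and_p_le_of_mem_Ico {w z u : ℕ} (hz : z ∈ P m g r w) (hu : u ∈ Set.Ico w z)
    (hum : u ≤ m) : pdef m g r u ∧ p m g r u ≤ z := by
  revert hu
  induction hz using Relation.ReflTransGen.head_induction_on with
  | refl => exact fun hu => absurd hu.2 hu.1.not_gt
  | @head a c hstep hcz ih =>
    intro hu
    by_cases hc : u < p m g r a
    · obtain ⟨hdef, hle⟩ := pdef_and_p_le_p_of_mem_Ico hstep.1 ⟨hu.1, hc⟩ hum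
      exact ⟨hdef, hle.trans (hstep.2 ▸ le_of_mem_P hcz)⟩
    · exact ih ⟨hstep.2 ▸ not_lt.mp hc, hu.2⟩

lemma lt_of_mem_y_of_mem_A {z u w : ℕ} (hu : u ∈ y m g r z) (hw : w ∈ A m g r z) : u < w := by
  by_contra hwu
  obtain ⟨-, hum, huz, hpu⟩ := hu
  obtain ⟨hdef, hle⟩ := pdef_and_p_le_of_mem_Ico hw.2.2 ⟨not_lt.mp hwu, huz⟩ hum
  have hz : pdef m g r z := pdef_iff_p_ne_zero.mpr (hpu ▸ pdef_iff_p_ne_zero.mp hdef)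
  exact (hpu ▸ hle).not_gt (lt_p hz)

lemma A_subset_A {a b : ℕ} (h : b ∈ P m g r a) : A m g r a ⊆ A m g r b :=
  fun _ hw => ⟨hw.1, hw.2.1, hw.2.2.trans h⟩

lemma disjoint_y_A {z k : ℕ} (hz : z ∈ P m g r k) : Disjoint (y m g r z) (A m g r k) :=
  disjoint_left.mpr fun _ hw hA => (lt_of_mem_y_of_mem_A hw (A_subset_A hz hA)).false

lemma p_mem_P_of_mem_y {z w : ℕ} (hz : pdef m g r z) (hw : w ∈ y m g r z) :
    p m g r z ∈ P m g r w := by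
  have hpw : p m g r w = p m g r z := hw.2.2.2
  have hdef : pdef m g r w := pdef_iff_p_ne_zero.mpr (hpw ▸ pdef_iff_p_ne_zero.mp hz)
  exact Relation.ReflTransGen.single ⟨hdef, hpw.symm⟩

lemma y_subset_A {k0 k1 z : ℕ} (hk1 : k1 ∈ P m g r k0) (hz : z ∈ P m g r k0 \ P m g r k1) :
    y m g r z ⊆ A m g r k1 := by
  intro w hw
  refine ⟨hw.1, hw.2.1, ?_⟩
  have hk1z : k1 ∈ P m g r z := (mem_P_total hk1 hz.1).resolve_left hz.2
  obtain hzk1 | ⟨d, hzd, hdk1⟩ := hk1z.cases_head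
  · exact absurd (hzk1 ▸ Relation.ReflTransGen.refl) hz.2
  · exact P_subset_P (p_mem_P_of_mem_y hzd.1 hw) (hzd.2 ▸ hdk1)

lemma T_eq_union {k0 k1 : ℕ} (hk1 : k1 ∈ P m g r k0) :
    T m g r k0 = ((⋃ z ∈ P m g r k0 \ P m g r k1, y m g r z) ∪ {k0}) ∪
      ⋃ z ∈ P m g r k1, y m g r z := by
  rw [T, Set.union_comm, Set.union_assoc, Set.union_comm {k0}, ← Set.union_assoc,
    ← biUnion_union, sdiff_union_of_subset (P_subset_P hk1)]

theorem statement_4_general (m : ℕ) (g r : ℕ → ℝ) :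
    ∀ k0, 1 ≤ k0 → k0 ≤ m → ∀ k1 ∈ P m g r k0,
      (T m g r k0 ∩ A m g r k1
          = (⋃ z ∈ (P m g r k0 \ P m g r k1), y m g r z) ∪ {k0} ∧
       T m g r k0 ∩ A m g r k1
          = {z ∈ T m g r k0 | sInf (T m g r k0 ∩ A m g r k1) ≤ z}) ∧
      (T m g r k0 \ A m g r k1 = ⋃ z ∈ P m g r k1, y m g r z ∧
       T m g r k0 \ A m g r k1
          = {z ∈ T m g r k0 | z < sInf (T m g r k0 ∩ A m g r k1)}) := by
  intro k0 hk01 hk0m k1 hk1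
  have hsub : (⋃ z ∈ P m g r k0 \ P m g r k1, y m g r z) ∪ {k0} ⊆ A m g r k1 :=
    union_subset (iUnion₂_subset fun _ hz => y_subset_A hk1 hz)
      (singleton_subset_iff.mpr ⟨hk01, hk0m, hk1⟩)
  have hdisj : Disjoint (⋃ z ∈ P m g r k1, y m g r z) (A m g r k1) :=
    disjoint_iUnion₂_left.mpr fun _ hz => disjoint_y_A hz
  have hinter := T_eq_union hk1 ▸ union_inter_eq_left_of_subset_of_disjoint hsub hdisj
  have hdiff := T_eq_union hk1 ▸ union_diff_eq_right_of_subset_of_disjoint hsub hdisj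
  have hne : (T m g r k0 ∩ A m g r k1).Nonempty := ⟨k0, hinter ▸ Or.inr rfl⟩
  have hlt : ∀ a ∈ T m g r k0 \ A m g r k1, ∀ b ∈ T m g r k0 ∩ A m g r k1, a < b := by
    intro a ha b hb
    obtain ⟨z, hz, haz⟩ := mem_iUnion₂.mp (hdiff ▸ ha)
    exact lt_of_mem_y_of_mem_A haz (A_subset_A hz hb.2)
  exact ⟨⟨hinter, Nat.inter_eq_sep_sInf_le hne hlt⟩, ⟨hdiff, Nat.diff_eq_sep_lt_sInf hne hlt⟩⟩

/-- For every `k0 ∈ M` and every `k1 ∈ P(k0)`, setting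
`z0 := min (T(k0) ∩ A(k1))`:
(1) `T(k0) ∩ A(k1) = (⋃_{z ∈ P(k0)\P(k1)} y(z)) ∪ {k0} = {z ∈ T(k0) : z ≥ z0}`;
(2) `T(k0) \ A(k1) = ⋃_{z ∈ P(k1)} y(z) = {z ∈ T(k0) : z < z0}`. -/
theorem statement_4 (m : ℕ) (g r : ℕ → ℝ)
    (hm : 1 ≤ m)
    (hg1 : 0 < g 1) (hr1 : 0 < r 1)
    (hg : ∀ i j, 1 ≤ i → i < j → j ≤ m → g i < g j)
    (hr : ∀ i j, 1 ≤ i → i < j → j ≤ m → r i < r j) :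
    ∀ k0, 1 ≤ k0 → k0 ≤ m → ∀ k1 ∈ P m g r k0,
      (T m g r k0 ∩ A m g r k1
          = (⋃ z ∈ (P m g r k0 \ P m g r k1), y m g r z) ∪ {k0} ∧
       T m g r k0 ∩ A m g r k1
          = {z ∈ T m g r k0 | sInf (T m g r k0 ∩ A m g r k1) ≤ z}) ∧
      (T m g r k0 \ A m g r k1 = ⋃ z ∈ P m g r k1, y m g r z ∧
       T m g r k0 \ A m g r k1
          = {z ∈ T m g r k0 | z < sInf (T m g r k0 ∩ A m g r k1)}) :=
  statement_4_general m g r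

end BSHM
end
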